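/- Let λ > 0, let p, d, T be natural numbers with p + d ≤ T, and let Z_p, …, Z_{2T−1} and δ_T, …, δ_{2T−1} be vectors in ℝ^q such that Z_k = a_{d−1} Z_{k−1} + ⋯ + a₀ Z_{k−d} + δ_k for all T ≤ k ≤ 2T−1, where a₀, …, a_{d−1} are real coefficients. Define V̄_k = λI + Σ_{j=p}^{k} Z_j Z_jᵀ. Then Σ_{k=T}^{2T−1} ‖V̄_{k−1}^{−1/2} Z_k‖₂² ≤ 2 d ‖a‖₂² · log det( V̄_{2T−1} · λ^{−1} ) + 2 Σ_{k=T}^{2T−1} ‖V̄_{k−1}^{−1/2} δ_k‖₂², where ‖a‖₂² = 1 + Σ_{i=0}^{d−1} a_i². -/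

import Mathlib

/-!
Up to `δ_k`, each `Z_k` is a combination of `Z_{k-1}, …, Z_{k-d}` with coefficients `a`, so by
Cauchy–Schwarz `‖V̄_{k-1}^{-1/2} Z_k‖²` is at most `2 ‖a‖²` times the sum of the
`‖V̄_{k-1}^{-1/2} Z_{k-t}‖²` plus `2 ‖V̄_{k-1}^{-1/2} δ_k‖²`. Since `V̄_j ≤ V̄_{k-1}` for `j < k`,
each of these is at most the potential `Z_jᵀ V̄_j⁻¹ Z_j`, and for every lag `t` the potentials sum
to at most `log det (V̄_{2T-1} / λ)` by the elliptical potential lemma: by the matrix determinant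
lemma and Sherman–Morrison, a rank-one update with `s = xᵀA⁻¹x` adds `log (1 + s)` to `log det`
and has potential `s / (1 + s) ≤ log (1 + s)`.
-/

open Matrix Finset

/-- Euclidean norm of a finitely supported real vector. -/
noncomputable def evnorm {α : Type*} [Fintype α] (x : α → ℝ) : ℝ :=
  Real.sqrt (∑ i, (x i) ^ 2)

/-- The regularized Gram matrix `V̄_k = λ I + ∑_{j=p}^{k} Z_j Z_jᵀ`. -/
noncomputable def Vbar {q : ℕ} (lam : ℝ) (p : ℕ) (Z : ℕ → Fin q → ℝ) (k : ℕ) :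
    Matrix (Fin q) (Fin q) ℝ :=
  lam • (1 : Matrix (Fin q) (Fin q) ℝ) + ∑ j ∈ Finset.Icc p k, vecMulVec (Z j) (Z j)

open scoped Classical in
/-- The inverse square root `V^{-1/2}` of a positive semidefinite matrix
(junk value `0` if `V` is not positive semidefinite). -/
noncomputable def matInvSqrt {q : ℕ} (V : Matrix (Fin q) (Fin q) ℝ) :
    Matrix (Fin q) (Fin q) ℝ :=
  if h : V.PosSemidef then
    (h.1.eigenvectorUnitary.1 * diagonal (Real.sqrt ∘ h.1.eigenvalues) *
      (star h.1.eigenvectorUnitary : Matrix (Fin q) (Fin q) ℝ))⁻¹ else 0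

namespace Matrix

variable {n : Type*}

lemma PosSemidef.transpose_eq {A : Matrix n n ℝ} (hA : A.PosSemidef) : Aᵀ = A :=
  (isHermitian_iff_isSymm.mp hA.isHermitian).eq

variable [Fintype n]

lemma PosSemidef.dotProduct_mulVec_self_nonneg {A : Matrix n n ℝ} (hA : A.PosSemidef)
    (x : n → ℝ) : 0 ≤ x ⬝ᵥ (A *ᵥ x) := by
  simpa using hA.dotProduct_mulVec_nonneg x

lemma posSemidef_vecMulVec_self (x : n → ℝ) : (vecMulVec x x).PosSemidef := by
  simpa using posSemidef_vecMulVec_self_star x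

lemma posSemidef_sum_vecMulVec_self {ι : Type*} (s : Finset ι) (x : ι → n → ℝ) :
    (∑ i ∈ s, vecMulVec (x i) (x i)).PosSemidef :=
  posSemidef_sum s fun i _ => posSemidef_vecMulVec_self (x i)

variable [DecidableEq n]

/-- Expand `0 ≤ (x - A⁻¹y)ᵀ A (x - A⁻¹y)`. -/
lemma PosDef.two_mul_dotProduct_sub_le {A : Matrix n n ℝ} (hA : A.PosDef) (x y : n → ℝ) :
    2 * (x ⬝ᵥ y) - x ⬝ᵥ (A *ᵥ x) ≤ y ⬝ᵥ (A⁻¹ *ᵥ y) := by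
  have hdet : IsUnit A.det := hA.det_pos.ne'.isUnit
  have hsq := hA.posSemidef.dotProduct_mulVec_self_nonneg (x - A⁻¹ *ᵥ y)
  have hAx : A *ᵥ (x - A⁻¹ *ᵥ y) = A *ᵥ x - y := by
    rw [mulVec_sub, mulVec_mulVec, mul_nonsing_inv _ hdet, one_mulVec]
  have hcross : (A⁻¹ *ᵥ y) ⬝ᵥ (A *ᵥ x) = x ⬝ᵥ y := by
    rw [dotProduct_mulVec, ← mulVec_transpose, mulVec_mulVec, hA.posSemidef.transpose_eq,
      mul_nonsing_inv _ hdet, one_mulVec, dotProduct_comm]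
  rw [hAx, sub_dotProduct, dotProduct_sub, dotProduct_sub, hcross, dotProduct_comm (A⁻¹ *ᵥ y) y]
    at hsq
  linarith

/-- Take `x = B⁻¹y` in `two_mul_dotProduct_sub_le` and use `A ≤ B`. -/
lemma PosDef.dotProduct_inv_mulVec_le {A B : Matrix n n ℝ} (hA : A.PosDef)
    (hAB : (B - A).PosSemidef) (y : n → ℝ) :
    y ⬝ᵥ (B⁻¹ *ᵥ y) ≤ y ⬝ᵥ (A⁻¹ *ᵥ y) := by
  have hB : B.PosDef := by simpa using hA.add_posSemidef hAB
  have hBx : B *ᵥ (B⁻¹ *ᵥ y) = y := by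
    rw [mulVec_mulVec, mul_nonsing_inv _ hB.det_pos.ne'.isUnit, one_mulVec]
  have hgap := hAB.dotProduct_mulVec_self_nonneg (B⁻¹ *ᵥ y)
  rw [sub_mulVec, dotProduct_sub, hBx] at hgap
  linarith [hA.two_mul_dotProduct_sub_le (B⁻¹ *ᵥ y) y, dotProduct_comm (B⁻¹ *ᵥ y) y]

lemma det_add_vecMulVec_self {A : Matrix n n ℝ} (hA : IsUnit A.det) (x : n → ℝ) :
    (A + vecMulVec x x).det = A.det * (1 + x ⬝ᵥ (A⁻¹ *ᵥ x)) := by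
  rw [vecMulVec_eq Unit, det_add_replicateCol_mul_replicateRow hA]
  congr 1
  rw [det_unique, add_apply, one_apply_eq, ← replicateRow_vecMul,
    replicateRow_mul_replicateCol_apply, dotProduct_mulVec]

/-- Sherman–Morrison: `A⁻¹x = (1 + xᵀA⁻¹x) (A + xxᵀ)⁻¹x`. -/
lemma PosDef.one_add_mul_dotProduct_inv_add_vecMulVec_self {A : Matrix n n ℝ} (hA : A.PosDef)
    (x : n → ℝ) :
    (1 + x ⬝ᵥ (A⁻¹ *ᵥ x)) * (x ⬝ᵥ ((A + vecMulVec x x)⁻¹ *ᵥ x)) = x ⬝ᵥ (A⁻¹ *ᵥ x) := by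
  set B := A + vecMulVec x x
  have hB : B.PosDef := hA.add_posSemidef (posSemidef_vecMulVec_self x)
  have hBA : B *ᵥ (A⁻¹ *ᵥ x) = (1 + x ⬝ᵥ (A⁻¹ *ᵥ x)) • x := by
    rw [add_mulVec, mulVec_mulVec, mul_nonsing_inv _ hA.det_pos.ne'.isUnit, one_mulVec,
      vecMulVec_mulVec, op_smul_eq_smul, add_smul, one_smul]
  have hAinv : A⁻¹ *ᵥ x = (1 + x ⬝ᵥ (A⁻¹ *ᵥ x)) • (B⁻¹ *ᵥ x) := by
    rw [← mulVec_smul, ← hBA, mulVec_mulVec, nonsing_inv_mul _ hB.det_pos.ne'.isUnit, one_mulVec]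
  conv_rhs => rw [hAinv, dotProduct_smul, smul_eq_mul]

/-- With `s = xᵀA⁻¹x`, the left-hand side is `s / (1 + s) = 1 - (1 + s)⁻¹` and `log det` grows
by `log (1 + s)`. -/
lemma PosDef.dotProduct_inv_add_vecMulVec_self_le_log_det {A : Matrix n n ℝ} (hA : A.PosDef)
    (x : n → ℝ) :
    x ⬝ᵥ ((A + vecMulVec x x)⁻¹ *ᵥ x) ≤
      Real.log (A + vecMulVec x x).det - Real.log A.det := by
  set s := x ⬝ᵥ (A⁻¹ *ᵥ x)
  have hs : 0 < 1 + s := by linarith [hA.inv.posSemidef.dotProduct_mulVec_self_nonneg x]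
  have hSM := hA.one_add_mul_dotProduct_inv_add_vecMulVec_self x
  rw [det_add_vecMulVec_self hA.det_pos.ne'.isUnit, Real.log_mul hA.det_pos.ne' hs.ne',
    add_sub_cancel_left]
  calc x ⬝ᵥ ((A + vecMulVec x x)⁻¹ *ᵥ x) = 1 - (1 + s)⁻¹ := by
        field_simp
        linarith
    _ ≤ Real.log (1 + s) := Real.one_sub_inv_le_log_of_pos hs

lemma PosDef.sum_Ico_dotProduct_inv_le_log_det {A : Matrix n n ℝ} (hA : A.PosDef)
    (x : ℕ → n → ℝ) (p M : ℕ) :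
    ∑ j ∈ Ico p M, x j ⬝ᵥ ((A + ∑ i ∈ Ico p (j + 1), vecMulVec (x i) (x i))⁻¹ *ᵥ x j) ≤
      Real.log (A + ∑ i ∈ Ico p M, vecMulVec (x i) (x i)).det - Real.log A.det := by
  induction M with
  | zero => simp
  | succ M ih =>
    rcases lt_or_ge M p with hM | hM
    · simp [Ico_eq_empty_of_le (show M + 1 ≤ p by omega)]
    · have hstep := (hA.add_posSemidef (posSemidef_sum_vecMulVec_self (Ico p M) x)
        ).dotProduct_inv_add_vecMulVec_self_le_log_det (x M)
      rw [sum_Ico_succ_top hM, sum_Ico_succ_top hM, ← add_assoc]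
      linarith

end Matrix

section EuclideanNorm

variable {α : Type*} [Fintype α]

lemma evnorm_sq (x : α → ℝ) : evnorm x ^ 2 = ∑ i, x i ^ 2 :=
  Real.sq_sqrt (sum_nonneg fun i _ => sq_nonneg (x i))

lemma evnorm_mulVec_sq (M : Matrix α α ℝ) (y : α → ℝ) :
    evnorm (M *ᵥ y) ^ 2 = y ⬝ᵥ ((Mᵀ * M) *ᵥ y) := by
  rw [evnorm_sq, ← mulVec_mulVec, dotProduct_mulVec, vecMul_transpose]
  simp only [dotProduct, sq]

/-- Cauchy–Schwarz on the combination, then `(u + v)² ≤ 2u² + 2v²`, coordinatewise. -/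
lemma evnorm_sum_smul_add_sq_le {ι : Type*} (s : Finset ι) (c : ι → ℝ) (y : ι → α → ℝ)
    (v : α → ℝ) :
    evnorm (∑ t ∈ s, c t • y t + v) ^ 2 ≤
      2 * (∑ t ∈ s, c t ^ 2) * ∑ t ∈ s, evnorm (y t) ^ 2 + 2 * evnorm v ^ 2 := by
  have hcoord : ∀ i, (∑ t ∈ s, c t • y t + v) i ^ 2 ≤
      2 * (∑ t ∈ s, c t ^ 2) * ∑ t ∈ s, y t i ^ 2 + 2 * v i ^ 2 := by
    intro i
    have hcs := sum_mul_sq_le_sq_mul_sq s c (fun t => y t i)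
    simp only [Pi.add_apply, Finset.sum_apply, Pi.smul_apply, smul_eq_mul]
    nlinarith [sq_nonneg (∑ t ∈ s, c t * y t i - v i)]
  calc evnorm (∑ t ∈ s, c t • y t + v) ^ 2
      ≤ ∑ i, (2 * (∑ t ∈ s, c t ^ 2) * ∑ t ∈ s, y t i ^ 2 + 2 * v i ^ 2) := by
        rw [evnorm_sq]
        exact sum_le_sum fun i _ => hcoord i
    _ = _ := by
        simp only [evnorm_sq]
        rw [sum_add_distrib, ← mul_sum, ← mul_sum, sum_comm]

end EuclideanNorm

lemma matInvSqrt_transpose_mul_self {q : ℕ} {V : Matrix (Fin q) (Fin q) ℝ} (hV : V.PosSemidef) :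
    (matInvSqrt V)ᵀ * matInvSqrt V = V⁻¹ := by
  rw [matInvSqrt, dif_pos hV]
  set U : Matrix (Fin q) (Fin q) ℝ := ↑hV.1.eigenvectorUnitary
  set D := diagonal (Real.sqrt ∘ hV.1.eigenvalues)
  have hsymm : (U * D * star U)ᵀ = U * D * star U := by
    simp [U, D, transpose_mul, star_eq_conjTranspose, Matrix.mul_assoc]
  have hDD : D * D = diagonal (RCLike.ofReal ∘ hV.1.eigenvalues) := by
    rw [diagonal_mul_diagonal]
    congr 1
    funext i
    simp [Real.mul_self_sqrt (hV.eigenvalues_nonneg i)]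
  have hsq : U * D * star U * (U * D * star U) = V := by
    have hU : star U * U = 1 := Unitary.star_mul_self_of_mem hV.1.eigenvectorUnitary.2
    calc U * D * star U * (U * D * star U) = U * D * (star U * U) * D * star U := by
          simp only [Matrix.mul_assoc]
      _ = V := by
          rw [hU, Matrix.mul_one, Matrix.mul_assoc U D D, hDD]
          exact hV.1.spectral_theorem.symm
  rw [transpose_nonsing_inv, hsymm, ← Matrix.mul_inv_rev, hsq]

lemma evnorm_matInvSqrt_mulVec_sq {q : ℕ} {V : Matrix (Fin q) (Fin q) ℝ} (hV : V.PosSemidef)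
    (y : Fin q → ℝ) : evnorm (matInvSqrt V *ᵥ y) ^ 2 = y ⬝ᵥ (V⁻¹ *ᵥ y) := by
  rw [evnorm_mulVec_sq, matInvSqrt_transpose_mul_self hV]

lemma sum_Icc_one_sub_eq_sum_range (f : ℕ → ℝ) (d : ℕ) :
    ∑ t ∈ Icc 1 d, f (d - t) = ∑ i ∈ range d, f i :=
  sum_nbij' (d - ·) (d - ·) (by intro t; simp only [mem_Icc, mem_range]; omega)
    (by intro t; simp only [mem_Icc, mem_range]; omega)
    (by intro t; simp only [mem_Icc]; omega) (by intro t; simp only [mem_range]; omega)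
    (fun _ _ => rfl)

section Vbar

variable {q : ℕ} {lam : ℝ} {p : ℕ} {Z : ℕ → Fin q → ℝ}

lemma Vbar_posDef (hlam : 0 < lam) (k : ℕ) : (Vbar lam p Z k).PosDef :=
  (PosDef.one.smul hlam).add_posSemidef (posSemidef_sum_vecMulVec_self _ _)

lemma Vbar_sub_Vbar_posSemidef {j k : ℕ} (hjk : j ≤ k) :
    (Vbar lam p Z k - Vbar lam p Z j).PosSemidef := by
  rw [Vbar, Vbar, add_sub_add_left_eq_sub, ← sum_sdiff (Icc_subset_Icc_right hjk),
    add_sub_cancel_right]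
  exact posSemidef_sum_vecMulVec_self _ _

lemma evnorm_matInvSqrt_Vbar_mulVec_sq_le (hlam : 0 < lam) {j k : ℕ} (hjk : j ≤ k) :
    evnorm (matInvSqrt (Vbar lam p Z k) *ᵥ Z j) ^ 2 ≤ Z j ⬝ᵥ ((Vbar lam p Z j)⁻¹ *ᵥ Z j) := by
  rw [evnorm_matInvSqrt_mulVec_sq (Vbar_posDef hlam k).posSemidef]
  exact (Vbar_posDef hlam j).dotProduct_inv_mulVec_le (Vbar_sub_Vbar_posSemidef hjk) _

lemma evnorm_matInvSqrt_Vbar_mulVec_lagged_sum_sq_le (hlam : 0 < lam) (a : ℕ → ℝ) (d k : ℕ)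
    (δ : Fin q → ℝ) :
    evnorm (matInvSqrt (Vbar lam p Z (k - 1)) *ᵥ (∑ t ∈ Icc 1 d, a (d - t) • Z (k - t) + δ)) ^ 2 ≤
      2 * (∑ i ∈ range d, a i ^ 2) *
          ∑ t ∈ Icc 1 d, Z (k - t) ⬝ᵥ ((Vbar lam p Z (k - t))⁻¹ *ᵥ Z (k - t)) +
        2 * evnorm (matInvSqrt (Vbar lam p Z (k - 1)) *ᵥ δ) ^ 2 := by
  rw [mulVec_add, mulVec_sum]
  simp only [mulVec_smul]
  refine (evnorm_sum_smul_add_sq_le _ _ _ _).trans ?_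
  rw [sum_Icc_one_sub_eq_sum_range (a · ^ 2)]
  gcongr with t ht
  exact evnorm_matInvSqrt_Vbar_mulVec_sq_le hlam (by simp only [mem_Icc] at ht; omega)

lemma sum_Icc_dotProduct_inv_Vbar_le_log_det (hlam : 0 < lam) (N : ℕ) :
    ∑ j ∈ Icc p N, Z j ⬝ᵥ ((Vbar lam p Z j)⁻¹ *ᵥ Z j) ≤
      Real.log (lam⁻¹ • Vbar lam p Z N).det := by
  have hpot := (PosDef.one.smul hlam).sum_Ico_dotProduct_inv_le_log_det Z p (N + 1)
  simp only [Ico_add_one_right_eq_Icc] at hpot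
  have hlog : Real.log (lam⁻¹ • Vbar lam p Z N).det =
      Real.log (Vbar lam p Z N).det - Real.log (lam • (1 : Matrix (Fin q) (Fin q) ℝ)).det := by
    rw [det_smul, det_smul, det_one, mul_one, Real.log_mul (by positivity)
      (Vbar_posDef hlam N).det_pos.ne', inv_pow, Real.log_inv]
    ring
  rwa [hlog]

end Vbar

lemma sum_Icc_sub_le_sum_Icc {f : ℕ → ℝ} (hf : ∀ j, 0 ≤ f j) {p t a b : ℕ} (h : p + t ≤ a) :
    ∑ k ∈ Icc a b, f (k - t) ≤ ∑ j ∈ Icc p b, f j := by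
  rw [← sum_image (g := (· - t)) fun x hx y hy hxy => by
    simp only [coe_Icc, Set.mem_Icc] at hx hy hxy
    omega]
  refine sum_le_sum_of_subset_of_nonneg ?_ fun j _ _ => hf j
  intro j
  simp only [mem_image, mem_Icc]
  rintro ⟨k, hk, rfl⟩
  omega

/-- if `Z_k = ∑_{t=1}^d a_{d-t} Z_{k-t} + δ_k` for `T ≤ k ≤ 2T-1`, then
`∑_{k=T}^{2T-1} ‖V̄_{k-1}^{-1/2} Z_k‖² ≤ 2 d ‖a‖₂² log det(V̄_{2T-1} λ⁻¹)
  + 2 ∑_{k=T}^{2T-1} ‖V̄_{k-1}^{-1/2} δ_k‖²`. -/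
theorem normalized_sum_arma_bound {q : ℕ} (lam : ℝ) (hlam : 0 < lam)
    (p d T : ℕ) (hT : p + d ≤ T) (a : ℕ → ℝ)
    (Z : ℕ → Fin q → ℝ) (δv : ℕ → Fin q → ℝ)
    (hrec : ∀ k, T ≤ k → k ≤ 2 * T - 1 →
      Z k = (∑ t ∈ Finset.Icc 1 d, a (d - t) • Z (k - t)) + δv k) :
    ∑ k ∈ Finset.Icc T (2 * T - 1),
        evnorm (matInvSqrt (Vbar lam p Z (k - 1)) *ᵥ Z k) ^ 2 ≤
      2 * d * (1 + ∑ i ∈ Finset.range d, (a i) ^ 2) *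
          Real.log ((lam⁻¹ • Vbar lam p Z (2 * T - 1)).det) +
        2 * ∑ k ∈ Finset.Icc T (2 * T - 1),
          evnorm (matInvSqrt (Vbar lam p Z (k - 1)) *ᵥ δv k) ^ 2 := by
  set K := Icc T (2 * T - 1)
  set π : ℕ → ℝ := fun j => Z j ⬝ᵥ ((Vbar lam p Z j)⁻¹ *ᵥ Z j)
  set A2 := ∑ i ∈ range d, a i ^ 2
  set L := Real.log ((lam⁻¹ • Vbar lam p Z (2 * T - 1)).det)
  have hπ (j : ℕ) : 0 ≤ π j :=
    (Vbar_posDef hlam j).inv.posSemidef.dotProduct_mulVec_self_nonneg _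
  have hshift : ∀ t ∈ Icc 1 d, ∑ k ∈ K, π (k - t) ≤ L := fun t ht =>
    (sum_Icc_sub_le_sum_Icc hπ (by simp only [mem_Icc] at ht; omega)).trans
      (sum_Icc_dotProduct_inv_Vbar_le_log_det hlam _)
  have hπsum : 0 ≤ ∑ t ∈ Icc 1 d, ∑ k ∈ K, π (k - t) :=
    sum_nonneg fun _ _ => sum_nonneg fun _ _ => hπ _
  calc _ ≤ ∑ k ∈ K, (2 * A2 * ∑ t ∈ Icc 1 d, π (k - t) +
          2 * evnorm (matInvSqrt (Vbar lam p Z (k - 1)) *ᵥ δv k) ^ 2) := by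
        refine sum_le_sum fun k hk => ?_
        obtain ⟨hTk, hk⟩ := mem_Icc.mp hk
        rw [hrec k hTk hk]
        exact evnorm_matInvSqrt_Vbar_mulVec_lagged_sum_sq_le hlam a d k (δv k)
    _ = 2 * A2 * ∑ t ∈ Icc 1 d, ∑ k ∈ K, π (k - t) +
          2 * ∑ k ∈ K, evnorm (matInvSqrt (Vbar lam p Z (k - 1)) *ᵥ δv k) ^ 2 := by
        rw [sum_add_distrib, ← mul_sum, ← mul_sum, sum_comm]
    _ ≤ 2 * (1 + A2) * ∑ t ∈ Icc 1 d, L +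
          2 * ∑ k ∈ K, evnorm (matInvSqrt (Vbar lam p Z (k - 1)) *ᵥ δv k) ^ 2 := by
        gcongr 2 * ?_ * ?_ + _
        · linarith
        · exact sum_le_sum hshift
    _ = _ := by
        rw [sum_const, Nat.card_Icc, Nat.add_sub_cancel, nsmul_eq_mul]
        ring
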